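/- Let F be a field of characteristic zero, K = F(t), and δ the derivation on K with δ(a) = 0 for a ∈ F and δ(t) = t. Let A = {a ∈ K : δ(y) = nay has a nonzero solution in K for some n ∈ ℕ}. Then F ∩ A = ℚ. -/

import Mathlib

/-!
Write `y = P / Q` and let `θ = X d/dX` be the Euler operator on `F[X]`, so that `δ P = θ P`.
Then `δ y = c y` becomes `θ P * Q - P * θ Q = c P Q`, and since `θ` multiplies the coefficient of
`X ^ k` by `k`, comparing top coefficients gives `c = deg P - deg Q`. Hence `n a ∈ ℤ` and `a ∈ ℚ`.
Conversely, `δ (t ^ m) = m t ^ m`, so `a = m / n` is realised by `y = t ^ m`.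
-/

open Polynomial

def Derivation.ofLeibniz {R A : Type*} [CommSemiring R] [CommRing A] [Algebra R A]
    (δ : A → A) (hadd : ∀ x y, δ (x + y) = δ x + δ y)
    (hmul : ∀ x y, δ (x * y) = δ x * y + x * δ y) (halg : ∀ r, δ (algebraMap R A r) = 0) :
    Derivation R A A :=
  Derivation.mk'
    { toFun := δ
      map_add' := hadd
      map_smul' := fun r x => by
        simp only [Algebra.smul_def, hmul, halg, zero_mul, zero_add, RingHom.id_apply] }
    fun a b => by simp only [LinearMap.coe_mk, AddHom.coe_mk, hmul, smul_eq_mul]; ring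

namespace Polynomial

variable {R : Type*}

theorem coeff_X_mul_derivative [CommSemiring R] (p : R[X]) (n : ℕ) :
    (X * derivative p).coeff n = n * p.coeff n := by
  cases n with
  | zero => simp
  | succ m => rw [coeff_X_mul, coeff_derivative]; push_cast; ring

theorem natDegree_X_mul_derivative_le [CommSemiring R] (p : R[X]) :
    (X * derivative p).natDegree ≤ p.natDegree := by
  refine natDegree_le_iff_coeff_eq_zero.mpr fun n hn => ?_
  rw [coeff_X_mul_derivative, coeff_eq_zero_of_natDegree_lt hn, mul_zero]

theorem eq_natDegree_sub_natDegree_of_euler [CommRing R] [IsDomain R] {p q : R[X]}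
    (hp : p ≠ 0) (hq : q ≠ 0) {c : R}
    (h : X * derivative p * q - p * (X * derivative q) = C c * (p * q)) :
    c = p.natDegree - q.natDegree := by
  have htop := congr_arg (coeff · (p.natDegree + q.natDegree)) h
  simp only [coeff_sub, coeff_C_mul, coeff_mul_degree_add_degree,
    coeff_mul_add_eq_of_natDegree_le (natDegree_X_mul_derivative_le p) le_rfl,
    coeff_mul_add_eq_of_natDegree_le le_rfl (natDegree_X_mul_derivative_le q),
    coeff_X_mul_derivative, coeff_natDegree] at htop
  have hlc : p.leadingCoeff * q.leadingCoeff ≠ 0 := by simp [hp, hq]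
  exact (mul_right_cancel₀ hlc (by linear_combination htop)).symm

end Polynomial

namespace RatFunc

variable {F : Type*} [Field F]

theorem derivation_algebraMap_of_apply_X (D : Derivation F (RatFunc F) (RatFunc F))
    (hX : D X = X) (p : F[X]) :
    D (algebraMap F[X] (RatFunc F) p) =
      algebraMap F[X] (RatFunc F) (Polynomial.X * derivative p) := by
  rw [← aeval_X_left_eq_algebraMap, Derivation.map_aeval, hX, aeval_X_left_eq_algebraMap,
    map_mul, algebraMap_X, smul_eq_mul, mul_comm]

theorem derivation_zpow_X_of_apply_X (D : Derivation F (RatFunc F) (RatFunc F))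
    (hX : D X = X) (m : ℤ) : D ((X : RatFunc F) ^ m) = m * (X : RatFunc F) ^ m := by
  rw [Derivation.leibniz_zpow, hX, zsmul_eq_mul, smul_eq_mul,
    ← zpow_add_one₀ X_ne_zero, sub_add_cancel]

theorem eq_natDegree_num_sub_natDegree_denom (D : Derivation F (RatFunc F) (RatFunc F))
    (hX : D X = X) {y : RatFunc F} (hy : y ≠ 0) {c : F}
    (h : D y = algebraMap F (RatFunc F) c * y) :
    c = y.num.natDegree - y.denom.natDegree := by
  refine eq_natDegree_sub_natDegree_of_euler (R := F) (num_ne_zero hy) y.denom_ne_zero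
    (algebraMap_injective F ?_)
  have hQ : algebraMap F[X] (RatFunc F) y.denom ≠ 0 := algebraMap_ne_zero y.denom_ne_zero
  rw [← num_div_denom y, Derivation.leibniz_div, derivation_algebraMap_of_apply_X D hX,
    derivation_algebraMap_of_apply_X D hX] at h
  simp only [map_sub, map_mul, algebraMap_C, ← algebraMap_eq_C, smul_eq_mul] at h ⊢
  field_simp at h
  linear_combination h

end RatFunc

/-- Let `K = F(t)` with the derivation `δ` vanishing on `F` and `δ(t) = t`,
and let `A = {a : δ(y) = n a y has a nonzero solution in K for some n ≥ 1}`.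
Then `F ∩ A = ℚ`. -/
theorem stmt14 {F : Type*} [Field F] [CharZero F]
    (δ : RatFunc F → RatFunc F)
    (hadd : ∀ x y : RatFunc F, δ (x + y) = δ x + δ y)
    (hmul : ∀ x y : RatFunc F, δ (x * y) = δ x * y + x * δ y)
    (hF : ∀ a : F, δ (algebraMap F (RatFunc F) a) = 0)
    (ht : δ RatFunc.X = RatFunc.X) :
    ∀ a : F,
      (∃ n : ℕ, 0 < n ∧ ∃ y : RatFunc F, y ≠ 0 ∧
        δ y = (n : RatFunc F) * algebraMap F (RatFunc F) a * y) ↔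
      ∃ q : ℚ, a = (q : F) := by
  let D := Derivation.ofLeibniz (R := F) δ hadd hmul hF
  change ∀ a : F, (∃ n : ℕ, 0 < n ∧ ∃ y, y ≠ 0 ∧ D y = _) ↔ _
  intro a
  constructor
  · rintro ⟨n, hn, y, hy, hDy⟩
    have hna : (n : F) * a = y.num.natDegree - y.denom.natDegree :=
      RatFunc.eq_natDegree_num_sub_natDegree_denom D ht hy (by rwa [map_mul, map_natCast])
    refine ⟨((y.num.natDegree : ℚ) - y.denom.natDegree) / n, ?_⟩
    have hn' : (n : F) ≠ 0 := Nat.cast_ne_zero.mpr hn.ne'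
    push_cast
    rw [← hna, mul_div_cancel_left₀ a hn']
  · rintro ⟨q, rfl⟩
    refine ⟨q.den, q.pos, RatFunc.X ^ q.num, zpow_ne_zero _ RatFunc.X_ne_zero, ?_⟩
    have hq : (q.den : F) * q = q.num := by exact_mod_cast q.den_mul_eq_num
    rw [RatFunc.derivation_zpow_X_of_apply_X D ht, ← map_natCast (algebraMap F (RatFunc F)),
      ← map_mul, hq, map_intCast]
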